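/- arXiv:2106.11191 — 5 statements merged into one kernel-verified Lean document; each statement's English description precedes it below -/
import Mathlib

section
/- The ω-order is a strict total order on nonempty strings: for any two nonempty strings S and T over a linearly ordered alphabet, exactly one of the following holds: S ≺_ω T, T ≺_ω S, or S = T. -/
/-- `listPow S k` is the `k`-fold concatenation `S^k` of the string `S`. -/
def listPow {α : Type*} (S : List α) : ℕ → List α
  | 0 => []
  | n + 1 => S ++ listPow S n

/-- A string is primitive if `S = R^k` implies `S = R` and `k = 1`. -/
def IsPrimitiveStr {α : Type*} (S : List α) : Prop :=
  S ≠ [] ∧ ∀ (R : List α) (k : ℕ), S = listPow R k → S = R ∧ k = 1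

/-- The length of the primitive root of `S`: the least positive `d` such that
`S` is the `(|S|/d)`-th power of its length-`d` prefix. -/
noncomputable def rootLen {α : Type*} (S : List α) : ℕ :=
  sInf {d | 0 < d ∧ listPow (S.take d) (S.length / d) = S}

/-- The primitive root of a (nonempty) string `S`. -/
noncomputable def listRoot {α : Type*} (S : List α) : List α := S.take (rootLen S)

/-- `omegaSeq S hS` is the infinite sequence `S^ω` obtained by repeating the
nonempty string `S` forever; `omegaSeq S hS n = S[(n mod |S|) + 1]` (1-based). -/
def omegaSeq {α : Type*} (S : List α) (hS : S ≠ []) (n : ℕ) : α :=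
  S.get ⟨n % S.length, Nat.mod_lt n (List.length_pos_iff.mpr hS)⟩

/-- Lexicographic order on infinite sequences: they differ somewhere and at the
first differing position the left one is smaller. -/
def SeqLexLt {α : Type*} [LinearOrder α] (f g : ℕ → α) : Prop :=
  ∃ n, (∀ m, m < n → f m = g m) ∧ f n < g n

/-- The ω-order on nonempty strings: `S ≺_ω T` iff either `root S = root T` and
`|S| < |T|`, or `S^ω <_lex T^ω`. -/
def OmegaLt {α : Type*} [LinearOrder α] (S T : List α) : Prop :=
  ∃ (hS : S ≠ []) (hT : T ≠ []),
    (listRoot S = listRoot T ∧ S.length < T.length) ∨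
      SeqLexLt (omegaSeq S hS) (omegaSeq T hT)

/-- `conj T i = T[i..n]T[1..i-1]`, the `i`-th rotation (conjugate) of `T`
(1-based index, taken cyclically). -/
def conj {α : Type*} (T : List α) (i : ℕ) : List α := T.rotate (i - 1)

theorem conj_ne_nil {α : Type*} {T : List α} (hT : T ≠ []) (i : ℕ) : conj T i ≠ [] := by
  intro h
  apply hT
  have h' := congrArg List.length h
  simp only [conj, List.length_rotate, List.length_nil] at h'
  exact List.length_eq_zero_iff.mp h'

theorem listPow_ne_nil {α : Type*} {S : List α} (hS : S ≠ []) {r : ℕ} (hr : 1 ≤ r) :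
    listPow S r ≠ [] := by
  cases r with
  | zero => omega
  | succ n =>
    intro h
    exact hS (List.append_eq_nil_iff.mp h).1

/-- Lexicographic order on finite strings. -/
def LexLt {α : Type*} [LinearOrder α] (U V : List α) : Prop := List.Lex (· < ·) U V

/-- Position `i` of `T` is cyclic S-type if `conj_i(T) <_lex conj_{i+1}(T)`. -/
def SType {α : Type*} [LinearOrder α] (T : List α) (i : ℕ) : Prop :=
  LexLt (conj T i) (conj T (i + 1))

/-- Position `i` of `T` is cyclic L-type if `conj_i(T) >_lex conj_{i+1}(T)`. -/
def LType {α : Type*} [LinearOrder α] (T : List α) (i : ℕ) : Prop :=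
  LexLt (conj T (i + 1)) (conj T i)

/-- `cyc T hT i` is the character `T[i]`, 1-based and taken cyclically. -/
def cyc {α : Type*} (T : List α) (hT : T ≠ []) (i : ℕ) : α := omegaSeq T hT (i - 1)

/-- A cyclic S-type position `i` is LMS if position `i-1` (cyclically, so
position `0` means `n`) is cyclic L-type. -/
def IsLMS {α : Type*} [LinearOrder α] (T : List α) (i : ℕ) : Prop :=
  SType T i ∧ LType T (if i = 1 then T.length else i - 1)

/-- The cyclic distance from position `i` to the first LMS position of `T`
strictly after `i` (in cyclic order). -/
noncomputable def lmsDist {α : Type*} [LinearOrder α] (T : List α) (i : ℕ) : ℕ :=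
  sInf {m | 0 < m ∧ IsLMS T ((i + m - 1) % T.length + 1)}

/-- The LMS-prefix of `conj_i(T)`: the cyclic factor of `T` from position `i`
to the first LMS position strictly after `i`, inclusive at both ends. -/
noncomputable def lmsPrefix {α : Type*} [LinearOrder α] (T : List α) (i : ℕ) : List α :=
  (conj T i ++ conj T i).take (lmsDist T i + 1)

/-- The LMS-order: `U <_LMS V` iff `V` is a proper prefix of `U`, or neither is
a prefix of the other and `U <_lex V`. -/
def LMSLt {α : Type*} [LinearOrder α] (U V : List α) : Prop :=
  (V <+: U ∧ V ≠ U) ∨ (¬ U <+: V ∧ ¬ V <+: U ∧ LexLt U V)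

/-!
A nonempty string and its primitive root have the same infinite power, and the length of the
root is the least period of that power; hence `root S = root T` iff `S^ω = T^ω`. So `S ≺_ω T`
says exactly that `(S^ω, |S|)` is lexicographically smaller than `(T^ω, |T|)`. This pair
determines `S`, and the lexicographic orders on `ℕ → α` and on pairs are linear.
-/

open Function

section OmegaOrder

variable {α : Type*}

theorem length_listPow (R : List α) (k : ℕ) : (listPow R k).length = k * R.length := by
  induction k with
  | zero => simp [listPow]
  | succ k ih => rw [listPow, List.length_append, ih, Nat.succ_mul, Nat.add_comm]

theorem getElem_listPow {R : List α} (hR : R ≠ []) {k i : ℕ} (hi : i < (listPow R k).length) :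
    (listPow R k)[i] = R[i % R.length]'(Nat.mod_lt _ (List.length_pos_iff.mpr hR)) := by
  induction k generalizing i with
  | zero => simp [listPow] at hi
  | succ k ih =>
    simp only [listPow, List.getElem_append]
    split_ifs with h
    · simp only [Nat.mod_eq_of_lt h]
    · have hi' : i - R.length < (listPow R k).length := by
        rw [length_listPow] at hi ⊢
        rw [Nat.succ_mul] at hi
        omega
      rw [ih hi']
      simp only [Nat.mod_eq_sub_mod (not_lt.mp h)]

theorem omegaSeq_congr {S T : List α} (h : S = T) (hS : S ≠ []) (hT : T ≠ []) :
    omegaSeq S hS = omegaSeq T hT := by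
  subst h; rfl

theorem omegaSeq_of_lt {S : List α} (hS : S ≠ []) {i : ℕ} (hi : i < S.length) :
    omegaSeq S hS i = S[i] := by
  simp only [omegaSeq, List.get_eq_getElem, Nat.mod_eq_of_lt hi]

theorem omegaSeq_periodic {S : List α} (hS : S ≠ []) : Periodic (omegaSeq S hS) S.length := by
  intro n
  simp only [omegaSeq, Nat.add_mod_right]

theorem omegaSeq_listPow {R : List α} (hR : R ≠ []) {k : ℕ} (h : listPow R k ≠ []) :
    omegaSeq (listPow R k) h = omegaSeq R hR := by
  funext n
  simp only [omegaSeq, List.get_eq_getElem, getElem_listPow hR, length_listPow]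
  congr 1
  exact Nat.mod_mod_of_dvd n (Dvd.intro_left k rfl)

theorem eq_of_omegaSeq_eq_of_length_eq {S T : List α} (hS : S ≠ []) (hT : T ≠ [])
    (h : omegaSeq S hS = omegaSeq T hT) (hlen : S.length = T.length) : S = T := by
  apply List.ext_getElem hlen
  intro i hiS hiT
  rw [← omegaSeq_of_lt hS, ← omegaSeq_of_lt hT, h]

/-- Its periodic points are the periodic sequences, so `minimalPeriod seqShift s` is the least
period of `s`. -/
def seqShift (s : ℕ → α) : ℕ → α := fun n => s (n + 1)

theorem iterate_seqShift (k : ℕ) (s : ℕ → α) : seqShift^[k] s = fun n => s (n + k) := by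
  induction k with
  | zero => rfl
  | succ k ih => rw [iterate_succ_apply', ih]; funext n; exact congrArg s (by omega)

theorem isPeriodicPt_seqShift_iff {p : ℕ} {s : ℕ → α} :
    IsPeriodicPt seqShift p s ↔ Periodic s p := by
  rw [IsPeriodicPt, IsFixedPt, iterate_seqShift, funext_iff]
  rfl

theorem minimalPeriod_omegaSeq_dvd {S : List α} (hS : S ≠ []) :
    minimalPeriod seqShift (omegaSeq S hS) ∣ S.length :=
  (isPeriodicPt_seqShift_iff.mpr (omegaSeq_periodic hS)).minimalPeriod_dvd

theorem minimalPeriod_omegaSeq_pos {S : List α} (hS : S ≠ []) :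
    0 < minimalPeriod seqShift (omegaSeq S hS) :=
  (isPeriodicPt_seqShift_iff.mpr (omegaSeq_periodic hS)).minimalPeriod_pos
    (List.length_pos_iff.mpr hS)

theorem listPow_take_eq_self_iff {S : List α} (hS : S ≠ []) {d : ℕ} (hd : 0 < d) :
    listPow (S.take d) (S.length / d) = S ↔ d ∣ S.length ∧ Periodic (omegaSeq S hS) d := by
  constructor
  · intro h
    have hd_le : d ≤ S.length := by
      by_contra! hlt
      rw [Nat.div_eq_of_lt hlt] at h
      exact hS h.symm
    have htake : (S.take d).length = d := List.length_take_of_le hd_le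
    have hR : S.take d ≠ [] := List.ne_nil_of_length_pos (by rw [htake]; exact hd)
    refine ⟨?_, ?_⟩
    · have hlen := congrArg List.length h
      rw [length_listPow, htake] at hlen
      exact Dvd.intro_left _ hlen
    · have hP : listPow (S.take d) (S.length / d) ≠ [] := by rw [h]; exact hS
      rw [omegaSeq_congr h.symm hS hP, omegaSeq_listPow hR]
      simpa only [htake] using omegaSeq_periodic hR
  · rintro ⟨hdvd, hper⟩
    have hd_le : d ≤ S.length := Nat.le_of_dvd (List.length_pos_iff.mpr hS) hdvd
    have htake : (S.take d).length = d := List.length_take_of_le hd_le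
    have hR : S.take d ≠ [] := List.ne_nil_of_length_pos (by rw [htake]; exact hd)
    apply List.ext_getElem
    · rw [length_listPow, htake, Nat.div_mul_cancel hdvd]
    · intro i hi hiS
      rw [getElem_listPow hR, List.getElem_take]
      simp only [htake]
      rw [← omegaSeq_of_lt hS, ← omegaSeq_of_lt hS, hper.map_mod_nat]

theorem rootLen_eq_minimalPeriod {S : List α} (hS : S ≠ []) :
    rootLen S = minimalPeriod seqShift (omegaSeq S hS) := by
  set p := minimalPeriod seqShift (omegaSeq S hS)
  have hp : 0 < p := minimalPeriod_omegaSeq_pos hS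
  have hp_mem : p ∈ {d | 0 < d ∧ listPow (S.take d) (S.length / d) = S} :=
    ⟨hp, (listPow_take_eq_self_iff hS hp).mpr ⟨minimalPeriod_omegaSeq_dvd hS,
      isPeriodicPt_seqShift_iff.mp (isPeriodicPt_minimalPeriod _ _)⟩⟩
  refine le_antisymm (Nat.sInf_le hp_mem) ?_
  obtain ⟨hr, hpow⟩ := Nat.sInf_mem ⟨p, hp_mem⟩
  exact IsPeriodicPt.minimalPeriod_le hr
    (isPeriodicPt_seqShift_iff.mpr ((listPow_take_eq_self_iff hS hr).mp hpow).2)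

theorem rootLen_pos {S : List α} (hS : S ≠ []) : 0 < rootLen S :=
  rootLen_eq_minimalPeriod hS ▸ minimalPeriod_omegaSeq_pos hS

theorem rootLen_dvd_length {S : List α} (hS : S ≠ []) : rootLen S ∣ S.length :=
  rootLen_eq_minimalPeriod hS ▸ minimalPeriod_omegaSeq_dvd hS

theorem omegaSeq_periodic_rootLen {S : List α} (hS : S ≠ []) :
    Periodic (omegaSeq S hS) (rootLen S) := by
  rw [rootLen_eq_minimalPeriod hS, ← isPeriodicPt_seqShift_iff]
  exact isPeriodicPt_minimalPeriod _ _

theorem listPow_listRoot {S : List α} (hS : S ≠ []) :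
    listPow (listRoot S) (S.length / rootLen S) = S :=
  (listPow_take_eq_self_iff hS (rootLen_pos hS)).mpr
    ⟨rootLen_dvd_length hS, omegaSeq_periodic_rootLen hS⟩

theorem length_listRoot {S : List α} (hS : S ≠ []) : (listRoot S).length = rootLen S :=
  List.length_take_of_le (Nat.le_of_dvd (List.length_pos_iff.mpr hS) (rootLen_dvd_length hS))

theorem listRoot_ne_nil {S : List α} (hS : S ≠ []) : listRoot S ≠ [] :=
  List.ne_nil_of_length_pos (length_listRoot hS ▸ rootLen_pos hS)

theorem omegaSeq_listRoot {S : List α} (hS : S ≠ []) :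
    omegaSeq (listRoot S) (listRoot_ne_nil hS) = omegaSeq S hS := by
  have hpow := listPow_listRoot hS
  rw [omegaSeq_congr hpow.symm hS (by rw [hpow]; exact hS), omegaSeq_listPow (listRoot_ne_nil hS)]

theorem listRoot_eq_of_omegaSeq_eq {S T : List α} (hS : S ≠ []) (hT : T ≠ [])
    (h : omegaSeq S hS = omegaSeq T hT) : listRoot S = listRoot T := by
  have hlen : rootLen S = rootLen T := by
    rw [rootLen_eq_minimalPeriod hS, rootLen_eq_minimalPeriod hT, h]
  apply List.ext_getElem (by rw [length_listRoot hS, length_listRoot hT, hlen])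
  intro i hiS hiT
  simp only [listRoot, List.getElem_take]
  rw [← omegaSeq_of_lt hS, ← omegaSeq_of_lt hT, h]

theorem listRoot_eq_iff_omegaSeq_eq {S T : List α} (hS : S ≠ []) (hT : T ≠ []) :
    listRoot S = listRoot T ↔ omegaSeq S hS = omegaSeq T hT := by
  refine ⟨fun h => ?_, listRoot_eq_of_omegaSeq_eq hS hT⟩
  rw [← omegaSeq_listRoot hS, ← omegaSeq_listRoot hT]
  exact omegaSeq_congr h _ _

def omegaKey (S : List α) (hS : S ≠ []) : Lex (ℕ → α) ×ₗ ℕ :=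
  toLex (toLex (omegaSeq S hS), S.length)

theorem omegaKey_inj {S T : List α} (hS : S ≠ []) (hT : T ≠ []) :
    omegaKey S hS = omegaKey T hT ↔ S = T := by
  refine ⟨fun h => ?_, by rintro rfl; rfl⟩
  simp only [omegaKey, toLex_inj, Prod.mk.injEq] at h
  exact eq_of_omegaSeq_eq_of_length_eq hS hT h.1 h.2

theorem omegaLt_iff_omegaKey_lt [LinearOrder α] {S T : List α} (hS : S ≠ []) (hT : T ≠ []) :
    OmegaLt S T ↔ omegaKey S hS < omegaKey T hT := by
  simp only [omegaKey, Prod.Lex.toLex_lt_toLex, toLex_inj]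
  rw [← listRoot_eq_iff_omegaSeq_eq hS hT, or_comm]
  exact ⟨fun ⟨_, _, h⟩ => h, fun h => ⟨hS, hT, h⟩⟩

end OmegaOrder

/-- The ω-order is a strict total order on nonempty strings:
for nonempty `S`, `T`, exactly one of `S ≺_ω T`, `T ≺_ω S`, `S = T` holds. -/
theorem omegaLt_trichotomy {α : Type*} [LinearOrder α] (S T : List α)
    (hS : S ≠ []) (hT : T ≠ []) :
    (OmegaLt S T ∧ ¬ OmegaLt T S ∧ S ≠ T) ∨
    (OmegaLt T S ∧ ¬ OmegaLt S T ∧ S ≠ T) ∨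
    (S = T ∧ ¬ OmegaLt S T ∧ ¬ OmegaLt T S) := by
  rw [omegaLt_iff_omegaKey_lt hS hT, omegaLt_iff_omegaKey_lt hT hS, ne_eq, ← omegaKey_inj hS hT]
  rcases lt_trichotomy (omegaKey S hS) (omegaKey T hT) with h | h | h
  · exact Or.inl ⟨h, h.not_gt, h.ne⟩
  · exact Or.inr (Or.inr ⟨h, h.not_lt, h.not_gt⟩)
  · exact Or.inr (Or.inl ⟨h, h.not_gt, h.ne'⟩)
end

section
/- Let T be a primitive string of length n ≥ 2, viewed cyclically, and let 1 ≤ i ≤ n. If T[i] = T[i+1] (indices cyclic), then position i has the same cyclic type as position i+1: i is cyclic S-type if and only if i+1 is cyclic S-type, and i is cyclic L-type if and only if i+1 is cyclic L-type. -/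
/-!
Write `conj_i(T) = aX` and `conj_{i+1}(T) = aY` with the common first letter `a = T[i] = T[i+1]`.
Then `conj_{i+1}(T) = Xa` and `conj_{i+2}(T) = Ya`, and since `|X| = |Y|`, comparing `aX` with `aY`
and comparing `Xa` with `Ya` both amount to comparing `X` with `Y`.
-/

namespace List

theorem lex_append_right_iff {α : Type*} {r : α → α → Prop} [Std.Irrefl r] {l₁ l₂ : List α}
    (t : List α) (h : l₁.length = l₂.length) : Lex r (l₁ ++ t) (l₂ ++ t) ↔ Lex r l₁ l₂ := by
  induction l₁ generalizing l₂ with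
  | nil =>
    rw [eq_nil_of_length_eq_zero h.symm]
    simpa using lex_irrefl Std.Irrefl.irrefl t
  | cons a l₁ ih =>
    obtain - | ⟨b, l₂⟩ := l₂
    · simp at h
    · simp only [cons_append, cons_lex_cons_iff, ih (Nat.succ.inj h)]

theorem lex_rotate_one_iff {α : Type*} {r : α → α → Prop} [Std.Irrefl r] {l₁ l₂ : List α}
    (hlen : l₁.length = l₂.length) (hhead : l₁.head? = l₂.head?) :
    Lex r (l₁.rotate 1) (l₂.rotate 1) ↔ Lex r l₁ l₂ := by
  match l₁, l₂, hhead with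
  | [], [], _ => rfl
  | a :: l₁, _ :: l₂, rfl =>
    simp only [rotate_cons_succ, rotate_zero]
    rw [lex_append_right_iff _ (by simpa using hlen), lex_cons_iff]

end List

theorem length_conj {α : Type*} (T : List α) (i : ℕ) : (conj T i).length = T.length :=
  T.length_rotate _

theorem conj_succ {α : Type*} (T : List α) {i : ℕ} (hi : 1 ≤ i) :
    conj T (i + 1) = (conj T i).rotate 1 := by
  rw [conj, conj, List.rotate_rotate]
  congr 1
  omega

theorem head?_conj {α : Type*} {T : List α} (hT : T ≠ []) (i : ℕ) :
    (conj T i).head? = some (cyc T hT i) := by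
  have hpos : 0 < T.length := List.length_pos_iff.mpr hT
  rw [conj, ← List.rotate_mod, List.head?_rotate (Nat.mod_lt _ hpos),
    List.getElem?_eq_getElem (Nat.mod_lt _ hpos)]
  rfl

theorem type_eq_of_adjacent_chars_eq_general {α : Type*} [LinearOrder α] (T : List α)
    (hT : IsPrimitiveStr T)
    (i : ℕ) (hi1 : 1 ≤ i)
    (heq : cyc T hT.1 i = cyc T hT.1 (i + 1)) :
    (SType T i ↔ SType T (i + 1)) ∧ (LType T i ↔ LType T (i + 1)) := by
  have hlen : (conj T i).length = (conj T (i + 1)).length := by rw [length_conj, length_conj]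
  have hhead : (conj T i).head? = (conj T (i + 1)).head? := by
    rw [head?_conj hT.1, head?_conj hT.1, heq]
  have hsucc : conj T (i + 1 + 1) = (conj T (i + 1)).rotate 1 := conj_succ T (by omega)
  have hS := List.lex_rotate_one_iff (r := (· < ·)) hlen hhead
  have hL := List.lex_rotate_one_iff (r := (· < ·)) hlen.symm hhead.symm
  rw [← conj_succ T hi1, ← hsucc] at hS hL
  exact ⟨hS.symm, hL.symm⟩

/-- For a primitive string `T` of length `n ≥ 2` (viewed cyclically)
and `1 ≤ i ≤ n`: if `T[i] = T[i+1]` then position `i` has the same cyclic type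
as position `i+1`. -/
theorem type_eq_of_adjacent_chars_eq {α : Type*} [LinearOrder α] (T : List α)
    (hT : IsPrimitiveStr T) (h2 : 2 ≤ T.length)
    (i : ℕ) (hi1 : 1 ≤ i) (hi2 : i ≤ T.length)
    (heq : cyc T hT.1 i = cyc T hT.1 (i + 1)) :
    (SType T i ↔ SType T (i + 1)) ∧ (LType T i ↔ LType T (i + 1)) :=
  type_eq_of_adjacent_chars_eq_general T hT i hi1 heq
end

section
/- Let T be a primitive string of length n ≥ 2, viewed cyclically, and let 1 ≤ i ≤ n. If T[i] is the smallest character occurring in T, then position i is cyclic S-type; if T[i] is the largest character occurring in T, then position i is cyclic L-type. -/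
theorem listPow_singleton {α : Type*} (a : α) : ∀ n, listPow [a] n = List.replicate n a
  | 0 => rfl
  | n + 1 => by rw [listPow, listPow_singleton a n, List.replicate_succ, List.singleton_append]

theorem IsPrimitiveStr.rotate_one_ne_self {α : Type*} {T : List α} (hT : IsPrimitiveStr T)
    (h2 : 2 ≤ T.length) : T.rotate 1 ≠ T := by
  intro hrot
  have : Nonempty α := ⟨T.head hT.1⟩
  obtain ⟨b, hb⟩ := List.rotate_one_eq_self_iff_eq_replicate.mp hrot
  have hTb : T = [b] := (hT.2 [b] T.length (by rw [listPow_singleton]; exact hb)).1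
  simp [hTb] at h2

theorem IsPrimitiveStr.conj_succ_ne_conj {α : Type*} {T : List α} (hT : IsPrimitiveStr T)
    (h2 : 2 ≤ T.length) {i : ℕ} (hi : 1 ≤ i) : conj T (i + 1) ≠ conj T i := by
  rw [conj_succ T hi, conj, List.rotate_rotate, add_comm, ← List.rotate_rotate]
  exact fun h => hT.rotate_one_ne_self h2 (List.rotate_injective _ h)

theorem cyc_eq_of_conj_eq_cons {α : Type*} {T : List α} (hT : T ≠ []) {i : ℕ} {c : α}
    {W : List α} (h : conj T i = c :: W) : cyc T hT i = c := by
  have h0 : 0 < (conj T i).length := by simp [h]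
  have := List.getElem_rotate T (i - 1) 0 h0
  simp_all [cyc, omegaSeq, conj]

namespace List

variable {α : Type*} [LinearOrder α]

theorem lex_cons_append_singleton_of_forall_le {c : α} :
    ∀ {W : List α}, (∀ a ∈ W, c ≤ a) → c :: W ≠ W ++ [c] → Lex (· < ·) (c :: W) (W ++ [c])
  | [], _, hne => absurd rfl hne
  | a :: W, hle, hne => by
    rcases (hle a mem_cons_self).lt_or_eq with hlt | rfl
    · exact Lex.rel hlt
    · refine Lex.cons (lex_cons_append_singleton_of_forall_le (fun b hb => hle b ?_) ?_)
      · exact mem_cons_of_mem _ hb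
      · exact fun h => hne (by rw [cons_append, h])

theorem lex_append_singleton_cons_of_forall_ge {c : α} :
    ∀ {W : List α}, (∀ a ∈ W, a ≤ c) → c :: W ≠ W ++ [c] → Lex (· < ·) (W ++ [c]) (c :: W)
  | [], _, hne => absurd rfl hne
  | a :: W, hle, hne => by
    rcases (hle a mem_cons_self).lt_or_eq with hlt | rfl
    · exact Lex.rel hlt
    · refine Lex.cons (lex_append_singleton_cons_of_forall_ge (fun b hb => hle b ?_) ?_)
      · exact mem_cons_of_mem _ hb
      · exact fun h => hne (by rw [cons_append, h])

end List

theorem type_of_extremal_char_general {α : Type*} [LinearOrder α] (T : List α)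
    (hT : IsPrimitiveStr T) (h2 : 2 ≤ T.length)
    (i : ℕ) (hi1 : 1 ≤ i) :
    ((∀ c ∈ T, cyc T hT.1 i ≤ c) → SType T i) ∧
    ((∀ c ∈ T, c ≤ cyc T hT.1 i) → LType T i) := by
  obtain ⟨c, W, hcW⟩ := List.exists_cons_of_ne_nil (conj_ne_nil hT.1 i)
  have hc : cyc T hT.1 i = c := cyc_eq_of_conj_eq_cons hT.1 hcW
  have hnext : conj T (i + 1) = W ++ [c] := by
    rw [conj_succ T hi1, hcW, List.rotate_cons_succ, List.rotate_zero]
  have hne : c :: W ≠ W ++ [c] := by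
    rw [← hcW, ← hnext]
    exact (hT.conj_succ_ne_conj h2 hi1).symm
  have hW : ∀ a ∈ W, a ∈ T := fun a ha =>
    List.mem_rotate.mp (hcW ▸ List.mem_cons_of_mem c ha : a ∈ conj T i)
  rw [SType, LType, LexLt, LexLt, hcW, hnext, hc]
  exact ⟨fun hmin =>
      List.lex_cons_append_singleton_of_forall_le (fun a ha => hmin a (hW a ha)) hne,
    fun hmax => List.lex_append_singleton_cons_of_forall_ge (fun a ha => hmax a (hW a ha)) hne⟩

/-- For a primitive string `T` of length `n ≥ 2` (viewed cyclically)
and `1 ≤ i ≤ n`: if `T[i]` is the smallest character occurring in `T`, then `i`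
is cyclic S-type; if `T[i]` is the largest character occurring in `T`, then `i`
is cyclic L-type. -/
theorem type_of_extremal_char {α : Type*} [LinearOrder α] (T : List α)
    (hT : IsPrimitiveStr T) (h2 : 2 ≤ T.length)
    (i : ℕ) (hi1 : 1 ≤ i) (hi2 : i ≤ T.length) :
    ((∀ c ∈ T, cyc T hT.1 i ≤ c) → SType T i) ∧
    ((∀ c ∈ T, c ≤ cyc T hT.1 i) → LType T i) :=
  type_of_extremal_char_general T hT h2 i hi1
end

section
/- Let U and V be primitive strings of length ≥ 2 over a linearly ordered alphabet, let 1 ≤ i ≤ |U| and 1 ≤ j ≤ |V| with U[i] = V[j], and suppose position i is cyclic L-type in U and position j is cyclic S-type in V. Then conj_i(U) ≺_ω conj_j(V). -/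
/-!
If `i` is cyclic L-type in `U`, then `conj_i(U)^ω` is a run `c^k` of its first letter `c`
followed by a letter smaller than `c`; dually, for an S-type position `j` of `V`, the run of
the first letter of `conj_j(V)^ω` ends in a larger letter. Both sequences start with the same
letter, so they first differ at the end of the shorter run, where `conj_i(U)^ω` is smaller.
-/

section SeqLexLt

variable {α : Type*} [LinearOrder α]

theorem eq_apply_zero_of_forall_succ_eq {β : Type*} {f : ℕ → β} {n : ℕ}
    (h : ∀ m < n, f (m + 1) = f m) : ∀ m ≤ n, f m = f 0 := by
  intro m hm
  induction m with
  | zero => rfl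
  | succ m ih => rw [h m hm, ih (by omega)]

theorem SeqLexLt.exists_run_lt_of_shift {f : ℕ → α} (h : SeqLexLt (fun n => f (n + 1)) f) :
    ∃ k, (∀ m < k, f m = f 0) ∧ f k < f 0 := by
  obtain ⟨n, hrun, hlt⟩ := h
  have hconst := eq_apply_zero_of_forall_succ_eq hrun
  exact ⟨n + 1, fun m hm => hconst m (by omega), hconst n le_rfl ▸ hlt⟩

theorem SeqLexLt.exists_run_gt_of_shift {f : ℕ → α} (h : SeqLexLt f (fun n => f (n + 1))) :
    ∃ k, (∀ m < k, f m = f 0) ∧ f 0 < f k := by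
  obtain ⟨n, hrun, hlt⟩ := h
  have hconst := eq_apply_zero_of_forall_succ_eq fun m hm => (hrun m hm).symm
  exact ⟨n + 1, fun m hm => hconst m (by omega), hconst n le_rfl ▸ hlt⟩

theorem seqLexLt_of_runs {f g : ℕ → α} (h0 : f 0 = g 0)
    (hf : ∃ k, (∀ m < k, f m = f 0) ∧ f k < f 0)
    (hg : ∃ k, (∀ m < k, g m = g 0) ∧ g 0 < g k) : SeqLexLt f g := by
  obtain ⟨k, hfrun, hfk⟩ := hf
  obtain ⟨k', hgrun, hgk'⟩ := hg
  refine ⟨min k k', fun m hm => ?_, ?_⟩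
  · rw [hfrun m (lt_min_iff.mp hm).1, h0, hgrun m (lt_min_iff.mp hm).2]
  · rcases lt_trichotomy k k' with hlt | rfl | hgt
    · rw [min_eq_left hlt.le, hgrun k hlt]
      exact h0 ▸ hfk
    · rw [min_self]
      exact hfk.trans (h0 ▸ hgk')
    · rw [min_eq_right hgt.le, hfrun k' hgt]
      exact h0 ▸ hgk'

end SeqLexLt

theorem omegaSeq_of_lt_s12 {α : Type*} {A : List α} (hA : A ≠ []) {n : ℕ} (hn : n < A.length) :
    omegaSeq A hA n = A[n] := by
  simp only [omegaSeq, List.get_eq_getElem, Nat.mod_eq_of_lt hn]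

theorem seqLexLt_omegaSeq_of_lexLt {α : Type*} [LinearOrder α] {A B : List α}
    (hA : A ≠ []) (hB : B ≠ []) (hlen : A.length = B.length) (h : LexLt A B) :
    SeqLexLt (omegaSeq A hA) (omegaSeq B hB) := by
  rcases List.lt_iff_exists.mp h with ⟨-, hlt⟩ | ⟨n, hnA, hnB, hrun, hn⟩
  · exact absurd hlen hlt.ne
  · refine ⟨n, fun m hm => ?_, ?_⟩
    · rw [omegaSeq_of_lt_s12 hA (hm.trans hnA), omegaSeq_of_lt_s12 hB (hm.trans hnB), hrun m hm]
    · rwa [omegaSeq_of_lt_s12 hA hnA, omegaSeq_of_lt_s12 hB hnB]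

theorem omegaSeq_conj {α : Type*} {T : List α} (hT : T ≠ []) {i : ℕ} (hi : 1 ≤ i) (n : ℕ) :
    omegaSeq (conj T i) (conj_ne_nil hT i) n = cyc T hT (i + n) := by
  simp only [cyc, omegaSeq, conj, List.get_eq_getElem, List.getElem_rotate, List.length_rotate]
  congr 1
  rw [Nat.mod_add_mod]
  congr 1
  omega

theorem seqLexLt_cyc_of_lexLt_conj {α : Type*} [LinearOrder α] {T : List α} (hT : T ≠ [])
    {i j : ℕ} (hi : 1 ≤ i) (hj : 1 ≤ j) (h : LexLt (conj T i) (conj T j)) :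
    SeqLexLt (fun n => cyc T hT (i + n)) (fun n => cyc T hT (j + n)) := by
  have := seqLexLt_omegaSeq_of_lexLt (conj_ne_nil hT i) (conj_ne_nil hT j) (by simp [conj]) h
  rwa [funext (omegaSeq_conj hT hi), funext (omegaSeq_conj hT hj)] at this

theorem LType.seqLexLt_shift {α : Type*} [LinearOrder α] {T : List α} (hT : T ≠ []) {i : ℕ}
    (hi : 1 ≤ i) (h : LType T i) :
    SeqLexLt (fun n => cyc T hT (i + (n + 1))) (fun n => cyc T hT (i + n)) := by
  simpa only [Nat.add_right_comm i 1, Nat.add_assoc] using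
    seqLexLt_cyc_of_lexLt_conj hT (by omega) hi h

theorem SType.seqLexLt_shift {α : Type*} [LinearOrder α] {T : List α} (hT : T ≠ []) {i : ℕ}
    (hi : 1 ≤ i) (h : SType T i) :
    SeqLexLt (fun n => cyc T hT (i + n)) (fun n => cyc T hT (i + (n + 1))) := by
  simpa only [Nat.add_right_comm i 1, Nat.add_assoc] using
    seqLexLt_cyc_of_lexLt_conj hT hi (by omega) h

theorem omegaLt_of_lType_sType_general {α : Type*} [LinearOrder α] (U V : List α)
    (hU : IsPrimitiveStr U) (hV : IsPrimitiveStr V)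
    (i j : ℕ) (hi1 : 1 ≤ i) (hj1 : 1 ≤ j)
    (heq : cyc U hU.1 i = cyc V hV.1 j)
    (hL : LType U i) (hS : SType V j) :
    OmegaLt (conj U i) (conj V j) := by
  refine ⟨conj_ne_nil hU.1 i, conj_ne_nil hV.1 j, Or.inr ?_⟩
  rw [funext (omegaSeq_conj hU.1 hi1), funext (omegaSeq_conj hV.1 hj1)]
  exact seqLexLt_of_runs heq (hL.seqLexLt_shift hU.1 hi1).exists_run_lt_of_shift
    (hS.seqLexLt_shift hV.1 hj1).exists_run_gt_of_shift

/-- For primitive strings `U`, `V` of length `≥ 2`, positions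
`1 ≤ i ≤ |U|`, `1 ≤ j ≤ |V|` with `U[i] = V[j]`, if `i` is cyclic L-type in `U`
and `j` is cyclic S-type in `V`, then `conj_i(U) ≺_ω conj_j(V)`. -/
theorem omegaLt_of_lType_sType {α : Type*} [LinearOrder α] (U V : List α)
    (hU : IsPrimitiveStr U) (hV : IsPrimitiveStr V)
    (hU2 : 2 ≤ U.length) (hV2 : 2 ≤ V.length)
    (i j : ℕ) (hi1 : 1 ≤ i) (hi2 : i ≤ U.length) (hj1 : 1 ≤ j) (hj2 : j ≤ V.length)
    (heq : cyc U hU.1 i = cyc V hV.1 j)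
    (hL : LType U i) (hS : SType V j) :
    OmegaLt (conj U i) (conj V j) :=
  omegaLt_of_lType_sType_general U V hU hV i j hi1 hj1 heq hL hS
end

section
/- Let w ≥ 1, let E be a set of strings of length w over an alphabet Σ (the trigger strings), and let D be a set of strings (the dictionary) such that every d ∈ D has length strictly greater than w, the length-w prefix of d is in E, the length-w suffix of d is in E, and no element of E occurs in d starting at any position other than 1 and |d| − w + 1. Then the set S = { s : s is a suffix of some d ∈ D and |s| > w } is prefix-free, i.e., no element of S is a proper prefix of another element of S. -/
theorem List.drop_length_sub_eq_of_isSuffix {α : Type*} {s d : List α} {w : ℕ} (h : s <:+ d)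
    (hw : w ≤ s.length) : d.drop (d.length - w) = s.drop (s.length - w) := by
  obtain ⟨v, rfl⟩ := h
  rw [List.length_append, show v.length + s.length - w = v.length + (s.length - w) by omega,
    List.drop_length_add_append]

theorem pfp_suffixes_prefixFree_general {α : Type*} (w : ℕ)
    (E : Set (List α))
    (D : Set (List α))
    (hDsuf : ∀ d ∈ D, d.drop (d.length - w) ∈ E)
    (hocc : ∀ d ∈ D, ∀ e ∈ E, ∀ p : ℕ, 1 ≤ p → e <+: d.drop (p - 1) →
      p = 1 ∨ p = d.length - w + 1) :
    ∀ s₁ ∈ {s : List α | ∃ d ∈ D, s <:+ d ∧ w < s.length},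
      ∀ s₂ ∈ {s : List α | ∃ d ∈ D, s <:+ d ∧ w < s.length},
        s₁ <+: s₂ → s₁ = s₂ := by
  rintro s₁ ⟨d₁, hd₁, hs₁, hw₁⟩ s₂ ⟨d₂, hd₂, ⟨u, rfl⟩, -⟩ ⟨t, rfl⟩
  -- The last `w` letters of `s₁` form a trigger string occurring in `d₂ = u ++ s₁ ++ t`
  -- strictly after its first position, so it must be the final one and `t` is empty.
  have htrigger : s₁.drop (s₁.length - w) ∈ E :=
    List.drop_length_sub_eq_of_isSuffix hs₁ hw₁.le ▸ hDsuf d₁ hd₁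
  have hoccur : s₁.drop (s₁.length - w) <+:
      (u ++ (s₁ ++ t)).drop (u.length + (s₁.length - w) + 1 - 1) := by
    rw [Nat.add_sub_cancel, List.drop_length_add_append]
    exact (List.prefix_append s₁ t).drop _
  have hpos := hocc _ hd₂ _ htrigger _ (Nat.le_add_left 1 _) hoccur
  simp only [List.length_append] at hpos
  rw [List.length_eq_zero_iff.mp (show t.length = 0 by omega), List.append_nil]

/-- In prefix-free parsing with window length `w ≥ 1`, trigger
strings `E` (all of length `w`) and dictionary `D` (phrases of length `> w`
starting and ending with a trigger string, with no other occurrence of a trigger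
string), the set `S` of suffixes of dictionary phrases of length `> w` is
prefix-free: no element of `S` is a proper prefix of another. -/
theorem pfp_suffixes_prefixFree {α : Type*} (w : ℕ) (hw : 1 ≤ w)
    (E : Set (List α)) (hE : ∀ e ∈ E, e.length = w)
    (D : Set (List α))
    (hDlen : ∀ d ∈ D, w < d.length)
    (hDpre : ∀ d ∈ D, d.take w ∈ E)
    (hDsuf : ∀ d ∈ D, d.drop (d.length - w) ∈ E)
    (hocc : ∀ d ∈ D, ∀ e ∈ E, ∀ p : ℕ, 1 ≤ p → e <+: d.drop (p - 1) →
      p = 1 ∨ p = d.length - w + 1) :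
    ∀ s₁ ∈ {s : List α | ∃ d ∈ D, s <:+ d ∧ w < s.length},
      ∀ s₂ ∈ {s : List α | ∃ d ∈ D, s <:+ d ∧ w < s.length},
        s₁ <+: s₂ → s₁ = s₂ :=
  pfp_suffixes_prefixFree_general w E D hDsuf hocc
end
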